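/- There exists K₀ > 1 such that for every K > K₀ and every ε ∈ (0,1) there exists a smooth function h : ℝ → ℝ with: (1) |h(t)| < ε and |h'(t)| < ε for all t; (2) for every t, if |h''(t)| ≤ √K then |h'''(t)| ≥ K; (3) |h''(t)| ≤ K/2 for all t. In particular, max{|h''(t)|, |h'''(t)|} > √K for all t. -/

import Mathlib

set_option maxHeartbeats 1000000

lemma hd_sin (c b t : ℝ) :
    HasDerivAt (fun x => c * Real.sin (b * x)) (c * b * Real.cos (b * t)) t := by
  have h1 : HasDerivAt (fun x : ℝ => b * x) b t := by
    simpa using (hasDerivAt_id t).const_mul b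
  have h2 := (Real.hasDerivAt_sin (b * t)).comp t h1
  have h3 := h2.const_mul c
  exact h3.congr_deriv (by ring)

lemma hd_cos (c b t : ℝ) :
    HasDerivAt (fun x => c * Real.cos (b * x)) (-(c * b) * Real.sin (b * t)) t := by
  have h1 : HasDerivAt (fun x : ℝ => b * x) b t := by
    simpa using (hasDerivAt_id t).const_mul b
  have h2 := (Real.hasDerivAt_cos (b * t)).comp t h1
  have h3 := h2.const_mul c
  exact h3.congr_deriv (by ring)

theorem stmt_4 :
    ∃ K₀ : ℝ, 1 < K₀ ∧
      ∀ K : ℝ, K₀ < K → ∀ ε : ℝ, 0 < ε → ε < 1 →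
        ∃ h : ℝ → ℝ, ContDiff ℝ (⊤ : ℕ∞) h ∧
          (∀ t, |h t| < ε ∧ |deriv h t| < ε) ∧
          (∀ t, |iteratedDeriv 2 h t| ≤ Real.sqrt K → |iteratedDeriv 3 h t| ≥ K) ∧
          (∀ t, |iteratedDeriv 2 h t| ≤ K / 2) ∧
          (∀ t, max |iteratedDeriv 2 h t| |iteratedDeriv 3 h t| > Real.sqrt K) := by
  refine ⟨8, by norm_num, ?_⟩
  intro K hK8 ε hε0 hε1
  have hK0 : (0:ℝ) < K := by linarith
  have hKε : 0 < K / ε := div_pos hK0 hε0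
  obtain ⟨b, hb_def⟩ : ∃ b : ℝ, b = K / ε + 4 := ⟨_, rfl⟩
  obtain ⟨a, ha_def⟩ : ∃ a : ℝ, a = K / (2 * b ^ 2) := ⟨_, rfl⟩
  have hb4 : (4:ℝ) < b := by rw [hb_def]; linarith
  have hb0 : (0:ℝ) < b := by linarith
  have hεb : K < ε * b := by
    have h1 : K / ε < b := by rw [hb_def]; linarith
    calc K = ε * (K / ε) := by field_simp
    _ < ε * b := (mul_lt_mul_iff_right₀ hε0).mpr h1
  have ha0 : 0 < a := by rw [ha_def]; positivity
  have hab2 : a * b * b = K / 2 := by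
    rw [ha_def]; field_simp
  -- derivative identities
  have e1 : deriv (fun t => a * Real.sin (b * t)) = fun t => a * b * Real.cos (b * t) :=
    funext fun t => (hd_sin a b t).deriv
  have e2 : deriv (fun t => a * b * Real.cos (b * t)) =
      fun t => -(a * b * b) * Real.sin (b * t) :=
    funext fun t => by simpa [mul_assoc] using (hd_cos (a * b) b t).deriv
  have e3 : deriv (fun t => -(a * b * b) * Real.sin (b * t)) =
      fun t => -(a * b * b) * b * Real.cos (b * t) :=
    funext fun t => (hd_sin (-(a * b * b)) b t).deriv
  have i2 : ∀ t, iteratedDeriv 2 (fun t => a * Real.sin (b * t)) t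
      = -(K / 2) * Real.sin (b * t) := by
    intro t
    have h0 : iteratedDeriv 2 (fun t => a * Real.sin (b * t))
        = deriv (deriv (fun t => a * Real.sin (b * t))) := by
      rw [iteratedDeriv_succ, iteratedDeriv_one]
    rw [h0, e1, e2, hab2]
  have i3 : ∀ t, iteratedDeriv 3 (fun t => a * Real.sin (b * t)) t
      = -(K / 2) * b * Real.cos (b * t) := by
    intro t
    have h0 : iteratedDeriv 3 (fun t => a * Real.sin (b * t))
        = deriv (deriv (deriv (fun t => a * Real.sin (b * t)))) := by
      rw [iteratedDeriv_succ, iteratedDeriv_succ, iteratedDeriv_one]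
    rw [h0, e1, e2, e3, hab2]
  have hsqK : Real.sqrt K ^ 2 = K := Real.sq_sqrt hK0.le
  have hsqK0 : 0 ≤ Real.sqrt K := Real.sqrt_nonneg K
  -- condition (2)
  have key : ∀ t, |iteratedDeriv 2 (fun t => a * Real.sin (b * t)) t| ≤ Real.sqrt K →
      |iteratedDeriv 3 (fun t => a * Real.sin (b * t)) t| ≥ K := by
    intro t ht
    rw [i2] at ht
    rw [i3]
    set s := Real.sin (b * t)
    set c := Real.cos (b * t)
    have hsc : s ^ 2 + c ^ 2 = 1 := Real.sin_sq_add_cos_sq (b * t)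
    have habs2 : |(-(K / 2)) * s| = K / 2 * |s| := by
      rw [abs_mul, abs_neg, abs_of_pos (show (0:ℝ) < K/2 by linarith)]
    rw [habs2] at ht
    have h1 : (K / 2 * |s|) ^ 2 ≤ K := by
      have := sq_le_sq' (by nlinarith [abs_nonneg s]) ht
      rwa [hsqK] at this
    have h1' : K ^ 2 * s ^ 2 ≤ 4 * K := by nlinarith [sq_abs s]
    have hs2 : K * s ^ 2 ≤ 4 := by nlinarith [sq_nonneg s]
    have hc2 : (1:ℝ) / 2 ≤ c ^ 2 := by nlinarith [sq_nonneg s]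
    have hcabs : (1:ℝ) / 2 ≤ |c| := by nlinarith [sq_abs c, abs_nonneg c]
    have habs3 : |(-(K / 2) * b) * c| = K / 2 * b * |c| := by
      rw [abs_mul, abs_mul, abs_neg, abs_of_pos (show (0:ℝ) < K/2 by linarith),
        abs_of_pos hb0]
    rw [ge_iff_le, habs3]
    have hbc : (2:ℝ) ≤ b * |c| := by nlinarith [abs_nonneg c]
    nlinarith [mul_le_mul_of_nonneg_left hbc (show (0:ℝ) ≤ K / 2 by linarith)]
  -- condition (3)
  have bound2 : ∀ t, |iteratedDeriv 2 (fun t => a * Real.sin (b * t)) t| ≤ K / 2 := by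
    intro t
    rw [i2, abs_mul, abs_neg, abs_of_pos (show (0:ℝ) < K/2 by linarith)]
    nlinarith [Real.abs_sin_le_one (b * t), abs_nonneg (Real.sin (b * t))]
  refine ⟨fun t => a * Real.sin (b * t), ?_, ?_, key, bound2, ?_⟩
  · apply ContDiff.mul contDiff_const
    exact Real.contDiff_sin.comp (contDiff_const.mul contDiff_id)
  · intro t
    constructor
    · have h1 : |a * Real.sin (b * t)| ≤ a := by
        rw [abs_mul, abs_of_pos ha0]
        nlinarith [Real.abs_sin_le_one (b * t), abs_nonneg (Real.sin (b * t))]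
      have h2 : a < ε := by
        rw [ha_def, div_lt_iff₀ (by positivity)]
        nlinarith
      linarith
    · rw [e1]
      have h1 : |a * b * Real.cos (b * t)| ≤ a * b := by
        rw [abs_mul, abs_of_pos (by positivity)]
        nlinarith [Real.abs_cos_le_one (b * t), abs_nonneg (Real.cos (b * t))]
      have h2 : a * b < ε := by
        have hab : a * b = K / (2 * b) := by rw [ha_def]; field_simp
        rw [hab, div_lt_iff₀ (by positivity)]
        nlinarith
      linarith
  · intro t
    rcases le_or_gt |iteratedDeriv 2 (fun t => a * Real.sin (b * t)) t| (Real.sqrt K)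
      with hle | hlt
    · have h3 := key t hle
      have hKK : Real.sqrt K < K := (Real.sqrt_lt' hK0).mpr (by nlinarith)
      calc Real.sqrt K < K := hKK
      _ ≤ |iteratedDeriv 3 (fun t => a * Real.sin (b * t)) t| := h3
      _ ≤ _ := le_max_right _ _
    · exact lt_of_lt_of_le hlt (le_max_left _ _)
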